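/- arXiv:1512.02085 — 5 statements merged into one kernel-verified Lean document; each statement's English description precedes it below -/
import Mathlib

section
/- Let K be a linear operator on ℂ^d such that K|i⟩ = c_i |f(i)⟩ for some function f : Fin d → Fin d and coefficients c_i ∈ ℂ (i.e., K is an incoherent Kraus operator in the standard basis). If additionally K† is incoherent (K†|i⟩ = d_i |g(i)⟩ for some g and coefficients d_i), then for every matrix ρ and every i, ⟨i| K ρ K† |i⟩ = ⟨i| K Φ(ρ) K† |i⟩, where Φ(ρ) = ∑_i ⟨i|ρ|i⟩ |i⟩⟨i| is the dephasing map in the standard basis. -/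
/-! Incoherence of `Kᴴ` says that row `i` of `K` vanishes off the single column `g i`, so
`(K ρ Kᴴ) i i = K i (g i) * ρ (g i) (g i) * conj (K i (g i))` sees only the diagonal of `ρ`. -/

open Matrix
/-- Dephasing map in the standard basis: keeps the diagonal of a matrix. -/
noncomputable def deph {d : ℕ} (ρ : Matrix (Fin d) (Fin d) ℂ) : Matrix (Fin d) (Fin d) ℂ :=
  Matrix.diagonal fun i => ρ i i

theorem Matrix.mul_mul_conjTranspose_apply_self_of_row_single {m n R : Type*} [Fintype n]
    [NonUnitalSemiring R] [StarRing R] (A : Matrix m n R) (ρ : Matrix n n R) {i : m} {j : n}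
    (hA : ∀ a, a ≠ j → A i a = 0) :
    (A * ρ * Aᴴ) i i = A i j * ρ j j * star (A i j) := by
  have sum_row (v : n → R) : ∑ a, A i a * v a = A i j * v j :=
    Finset.sum_eq_single j (fun a _ ha => by rw [hA a ha, zero_mul]) (by simp)
  have sum_row_star (v : n → R) : ∑ a, v a * star (A i a) = v j * star (A i j) :=
    Finset.sum_eq_single j (fun a _ ha => by rw [hA a ha, star_zero, mul_zero]) (by simp)
  simp only [mul_apply, conjTranspose_apply]
  rw [sum_row_star fun b => ∑ a, A i a * ρ a b, sum_row]

theorem stmt_0_general {d : ℕ} (K : Matrix (Fin d) (Fin d) ℂ)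
    (g : Fin d → Fin d) (e : Fin d → ℂ)
    (hKd : ∀ i j, Kᴴ j i = if j = g i then e i else 0)
    (ρ : Matrix (Fin d) (Fin d) ℂ) (i : Fin d) :
    (K * ρ * Kᴴ) i i = (K * deph ρ * Kᴴ) i i := by
  have row_single : ∀ a, a ≠ g i → K i a = 0 := fun a ha => by
    simpa [ha] using hKd i a
  rw [mul_mul_conjTranspose_apply_self_of_row_single K ρ row_single,
    mul_mul_conjTranspose_apply_self_of_row_single K (deph ρ) row_single, deph,
    diagonal_apply_eq]

/-- If `K` is incoherent (each column proportional to a basis vector) and `Kᴴ` is also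
incoherent, then diagonal matrix elements of `K ρ Kᴴ` only depend on the diagonal of `ρ`. -/
theorem stmt_0 {d : ℕ} (K : Matrix (Fin d) (Fin d) ℂ)
    (f g : Fin d → Fin d) (c e : Fin d → ℂ)
    (hK : ∀ i j, K j i = if j = f i then c i else 0)
    (hKd : ∀ i j, Kᴴ j i = if j = g i then e i else 0)
    (ρ : Matrix (Fin d) (Fin d) ℂ) (i : Fin d) :
    (K * ρ * Kᴴ) i i = (K * deph ρ * Kᴴ) i i :=
  stmt_0_general K g e hKd ρ i
end

section
/- Suppose K is a d×d complex matrix such that K is incoherent (K|i⟩ ∝ |f(i)⟩ for some function f) and the map ρ ↦ KρK† commutes with the dephasing map Φ. Then, restricted to indices i where K|i⟩ ≠ 0, the function f is injective; i.e., K can be written as ∑_i c_i |π(i)⟩⟨i| for some permutation π (strictly incoherent form, extending f arbitrarily to a bijection off the support). -/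
open Matrix

/-!
Feed the dephasing-commutation identity the off-diagonal unit `ρ = |i⟩⟨j|` with `i ≠ j`:
dephasing kills it, so `K ρ Kᴴ` has zero diagonal, i.e. `K a i * conj (K a j) = 0` for every
row `a`. For an incoherent `K` with `f i = f j`, the row `a = f i` gives `c i * conj (c j) = 0`.
-/

theorem Set.InjOn.exists_perm_eqOn {α : Type*} [Finite α] {f : α → α} {s : Set α}
    (hf : Set.InjOn f s) : ∃ π : Equiv.Perm α, Set.EqOn π f s := by
  classical
  exact ⟨(Equiv.Set.imageOfInjOn f s hf).extendSubtype,
    fun x hx => Equiv.extendSubtype_apply_of_mem _ x hx⟩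

theorem Matrix.mul_single_one_mul_conjTranspose_apply {m n α : Type*} [Fintype n] [DecidableEq n]
    [Semiring α] [StarRing α] (K : Matrix m n α) (i j : n) (a b : m) :
    (K * single i j (1 : α) * Kᴴ) a b = K a i * star (K b j) := by
  rw [mul_apply, Finset.sum_eq_single j
    (fun k _ hk => by rw [mul_single_apply_of_ne _ _ _ _ _ hk, zero_mul]) (by simp),
    mul_single_apply_same, mul_one, conjTranspose_apply]

theorem deph_single_of_ne {d : ℕ} {i j : Fin d} (hij : i ≠ j) :
    deph (single i j (1 : ℂ)) = 0 := by
  ext a b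
  simp only [deph, diagonal_apply, single_apply, Matrix.zero_apply]
  grind

theorem mul_star_eq_zero_of_commute_deph {d : ℕ} {K : Matrix (Fin d) (Fin d) ℂ}
    (hcomm : ∀ ρ, K * deph ρ * Kᴴ = deph (K * ρ * Kᴴ)) {i j : Fin d} (hij : i ≠ j)
    (a : Fin d) :
    K a i * star (K a j) = 0 := by
  have h := congrFun₂ (hcomm (single i j 1)) a a
  rwa [deph_single_of_ne hij, mul_zero, zero_mul, deph, diagonal_apply_eq,
    mul_single_one_mul_conjTranspose_apply, eq_comm] at h

/-- If `K` is an incoherent Kraus operator (`K|i⟩ = c i |f i⟩`) and `ρ ↦ K ρ Kᴴ` commutes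
with the dephasing map, then `f` is injective on the support of the coefficients `c`, and
hence extends to a permutation `π` agreeing with `f` on the support:
`K` is strictly incoherent. -/
theorem stmt_2 {d : ℕ} (K : Matrix (Fin d) (Fin d) ℂ) (f : Fin d → Fin d) (c : Fin d → ℂ)
    (hK : ∀ i j, K j i = if j = f i then c i else 0)
    (hcomm : ∀ ρ : Matrix (Fin d) (Fin d) ℂ, K * deph ρ * Kᴴ = deph (K * ρ * Kᴴ)) :
    (∀ i i', c i ≠ 0 → c i' ≠ 0 → f i = f i' → i = i') ∧
    ∃ π : Equiv.Perm (Fin d), ∀ i, c i ≠ 0 → π i = f i := by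
  have hinj : ∀ i i', c i ≠ 0 → c i' ≠ 0 → f i = f i' → i = i' := by
    intro i i' hi hi' hf
    by_contra hne
    have h := mul_star_eq_zero_of_commute_deph hcomm hne (f i)
    rw [hK, hK, if_pos rfl, if_pos hf] at h
    exact mul_ne_zero hi (star_ne_zero.mpr hi') h
  obtain ⟨π, hπ⟩ := Set.InjOn.exists_perm_eqOn (s := {i | c i ≠ 0})
    fun i hi i' hi' => hinj i i' hi hi'
  exact ⟨hinj, π, fun i hi => hπ hi⟩
end

section
/- Let U be a unitary on ℂ^{d_S} ⊗ H_α such that for every i and every unit vector |ψ⟩ ∈ H_α, U(|i⟩ ⊗ |ψ⟩) = |f(i)⟩ ⊗ |ψ'(i,ψ)⟩ for some function f : Fin d_S → Fin d_S and unit vectors |ψ'(i,ψ)⟩. Then f is a bijection and U = ∑_i |f(i)⟩⟨i| ⊗ U_i for some unitaries U_i on H_α. -/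
/-!
Feeding the basis vector `|i⟩ ⊗ |b⟩` to the hypothesis shows that column `(i, b)` of `U` lives in
the block `f i`, so `U` is block-structured with blocks `U_i := ⟨f i| U |i⟩`. Orthonormality of the
columns of `U` makes each `U_i` unitary and forces `U_i† U_{i'} = 0` whenever `f i = f i'` with
`i ≠ i'`; since a product of unitaries never vanishes (the ancilla is nonzero), `f` is injective,
hence bijective on the finite set `Fin d_S`.
-/

open Matrix

theorem Unitary.star_mul_ne_zero {R : Type*} [MonoidWithZero R] [StarMul R] [Nontrivial R]
    {u v : R} (hu : u ∈ unitary R) (hv : v ∈ unitary R) : star u * v ≠ 0 :=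
  (Unitary.isUnit_coe (U := ⟨star u * v, mul_mem (Unitary.star_mem hu) hv⟩)).ne_zero

theorem Pi.single_prod_eq_ite {ι κ R : Type*} [DecidableEq ι] [DecidableEq κ] [Zero R]
    (i : ι) (b : κ) (x : R) :
    (fun p : ι × κ => if p.1 = i then (Pi.single b x : κ → R) p.2 else 0) = Pi.single (i, b) x := by
  ext ⟨j, a⟩
  by_cases hj : j = i <;> simp [hj, Pi.single_apply]

section ControlledBlocks

variable {ι κ R : Type*}

def BlockSupportedAlong [Zero R] (U : Matrix (ι × κ) (ι × κ) R) (f : ι → ι) : Prop :=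
  ∀ j a i b, j ≠ f i → U (j, a) (i, b) = 0

def controlledBlock (U : Matrix (ι × κ) (ι × κ) R) (f : ι → ι) (i : ι) : Matrix κ κ R :=
  of fun a b => U (f i, a) (i, b)

theorem apply_eq_ite_controlledBlock [Zero R] [DecidableEq ι]
    {U : Matrix (ι × κ) (ι × κ) R} {f : ι → ι}
    (hU : BlockSupportedAlong U f) (j : ι) (a : κ) (i : ι) (b : κ) :
    U (j, a) (i, b) = if j = f i then controlledBlock U f i a b else 0 := by
  split_ifs with hj
  · subst hj; rfl
  · exact hU j a i b hj

variable [Fintype ι] [Fintype κ] [DecidableEq ι] [DecidableEq κ]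

theorem blockSupportedAlong_of_mulVec_single [NonAssocSemiring R]
    {U : Matrix (ι × κ) (ι × κ) R} {f : ι → ι}
    (h : ∀ i b, ∃ ψ' : κ → R, U *ᵥ Pi.single (i, b) 1 = fun p => if p.1 = f i then ψ' p.2 else 0) :
    BlockSupportedAlong U f := by
  intro j a i b hj
  obtain ⟨ψ', hψ'⟩ := h i b
  simpa [mulVec_single_one, hj] using congrFun hψ' (j, a)

theorem star_controlledBlock_mul [Semiring R] [StarRing R] {U : Matrix (ι × κ) (ι × κ) R}
    {f : ι → ι} (hU : star U * U = 1) (hsupp : BlockSupportedAlong U f) {i i' : ι}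
    (hf : f i = f i') :
    star (controlledBlock U f i) * controlledBlock U f i' = if i = i' then 1 else 0 := by
  ext b b'
  have hentry := congrFun (congrFun hU (i, b)) (i', b')
  -- only the block `f i = f i'` contributes to the inner product of columns `(i, b)`, `(i', b')`
  rw [mul_apply, Fintype.sum_prod_type, Finset.sum_eq_single (f i) (fun j _ hj =>
    Finset.sum_eq_zero fun a _ => by simp [star_apply, hsupp j a i b hj]) (by simp)] at hentry
  rw [mul_apply]
  simp only [star_apply, controlledBlock, of_apply, ← hf] at hentry ⊢
  rw [hentry]
  by_cases hi : i = i' <;> simp [hi, one_apply]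

variable [CommRing R] [StarRing R]

theorem controlledBlock_mem_unitaryGroup {U : Matrix (ι × κ) (ι × κ) R} {f : ι → ι}
    (hU : U ∈ unitaryGroup (ι × κ) R) (hsupp : BlockSupportedAlong U f) (i : ι) :
    controlledBlock U f i ∈ unitaryGroup κ R := by
  rw [mem_unitaryGroup_iff', star_controlledBlock_mul hU.1 hsupp rfl, if_pos rfl]

theorem injective_of_blockSupportedAlong [Nonempty κ] [Nontrivial R]
    {U : Matrix (ι × κ) (ι × κ) R} {f : ι → ι}
    (hU : U ∈ unitaryGroup (ι × κ) R) (hsupp : BlockSupportedAlong U f) :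
    Function.Injective f := by
  intro i i' hf
  by_contra hne
  apply Unitary.star_mul_ne_zero (controlledBlock_mem_unitaryGroup hU hsupp i)
    (controlledBlock_mem_unitaryGroup hU hsupp i')
  rw [star_controlledBlock_mul hU.1 hsupp hf, if_neg hne]

end ControlledBlocks

/-- An incoherent unitary on system ⊗ ancilla (mapping each `|i⟩⊗|ψ⟩` to
`|f i⟩⊗|ψ'⟩`) has `f` a bijection and is a controlled unitary
`U = ∑ i, |f i⟩⟨i| ⊗ U_i` with each `U_i` unitary on the ancilla. -/
theorem stmt_5 {dS dα : ℕ} [NeZero dα]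
    (U : Matrix (Fin dS × Fin dα) (Fin dS × Fin dα) ℂ)
    (hU : U ∈ Matrix.unitaryGroup (Fin dS × Fin dα) ℂ)
    (f : Fin dS → Fin dS)
    (h : ∀ (i : Fin dS) (ψ : Fin dα → ℂ), (∑ a, ‖ψ a‖ ^ 2 = 1) →
      ∃ ψ' : Fin dα → ℂ, (∑ a, ‖ψ' a‖ ^ 2 = 1) ∧
        U *ᵥ (fun p => if p.1 = i then ψ p.2 else 0) =
          fun p => if p.1 = f i then ψ' p.2 else 0) :
    Function.Bijective f ∧
    ∃ Us : Fin dS → Matrix (Fin dα) (Fin dα) ℂ,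
      (∀ i, Us i ∈ Matrix.unitaryGroup (Fin dα) ℂ) ∧
      ∀ j a i b, U (j, a) (i, b) = if j = f i then Us i a b else 0 := by
  have hsupp : BlockSupportedAlong U f := by
    refine blockSupportedAlong_of_mulVec_single fun i b => ?_
    have hnorm : ∑ a, ‖(Pi.single b 1 : Fin dα → ℂ) a‖ ^ 2 = 1 := by
      simp [Pi.single_apply, apply_ite]
    obtain ⟨ψ', -, hψ'⟩ := h i (Pi.single b 1) hnorm
    exact ⟨ψ', by rwa [Pi.single_prod_eq_ite] at hψ'⟩
  exact ⟨Finite.injective_iff_bijective.mp (injective_of_blockSupportedAlong hU hsupp),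
    controlledBlock U f, controlledBlock_mem_unitaryGroup hU hsupp,
    apply_eq_ite_controlledBlock hsupp⟩
end

section
/- Given any finite set of strictly incoherent Kraus operators {K_μ = ∑_i c^μ_i |π_μ(i)⟩⟨i| : μ = 0,…,k−1} on ℂ^d with ∑_μ K_μ†K_μ = I, there exist unitaries U_i on ℂ^{k+1}, an orthonormal family {|φ_μ⟩} in ℂ^{k+1}, and a state |0⟩ such that ⟨φ_μ|U_i|0⟩ = c^μ_i for all μ, i. Consequently the operation ρ ↦ K_μ ρ K_μ† arises from the controlled unitary ∑_i |i⟩⟨i| ⊗ U_i, measuring |φ_μ⟩ on the ancilla, and applying V_μ = ∑_i |π_μ(i)⟩⟨i|. -/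
/-!
Completeness of the Kraus operators says exactly that for each input index `i` the column
`(c μ i)_μ` is a unit vector. Padding it with a leading zero gives a unit vector of `ℂ^{k+1}`,
which is the `0`-th column of some unitary `U_i` (extend it to an orthonormal basis); the states
`φ μ` are then the standard basis vectors `e_{μ+1}`, so that `⟨φ μ|U_i|0⟩ = c μ i`.
-/

open Matrix

section

variable {𝕜 : Type*} [RCLike 𝕜]

theorem Matrix.exists_mem_unitaryGroup_col_eq {n : Type*} [Fintype n] [DecidableEq n] (j : n)
    (v : EuclideanSpace 𝕜 n) (hv : ‖v‖ = 1) :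
    ∃ U ∈ unitaryGroup n 𝕜, ∀ a, U a j = v a := by
  have hunit : Orthonormal 𝕜 (({j} : Set n).domRestrict fun _ => v) := by simp [hv]
  obtain ⟨b, hb⟩ := hunit.exists_orthonormalBasis_extension_of_card_eq (by simp)
  set e := EuclideanSpace.basisFun n 𝕜
  refine ⟨e.toBasis.toMatrix b, e.toMatrix_orthonormalBasis_mem_unitary b, fun a => ?_⟩
  rw [Module.Basis.toMatrix_apply, OrthonormalBasis.coe_toBasis_repr_apply, hb j rfl]
  rfl

theorem sum_norm_sq_eq_one_of_sum_conjTranspose_mul_eq_one {ι m n : Type*} [Fintype ι]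
    [Fintype m] [DecidableEq m] [DecidableEq n] (p : ι → n → m) (c : ι → n → 𝕜)
    (K : ι → Matrix m n 𝕜) (hK : ∀ μ i j, K μ j i = if j = p μ i then c μ i else 0)
    (hcomp : ∑ μ, (K μ)ᴴ * K μ = 1) (i : n) :
    ∑ μ, ‖c μ i‖ ^ 2 = 1 := by
  have hii := congrFun (congrFun hcomp i) i
  simp only [Matrix.sum_apply, mul_apply, conjTranspose_apply, hK, RCLike.star_def, mul_ite,
    mul_zero, Finset.sum_ite_eq', Finset.mem_univ, ↓reduceIte, RCLike.conj_mul,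
    one_apply_eq] at hii
  exact_mod_cast hii

end

/-- Dilation of strictly incoherent operations: given SI Kraus operators
`K μ = ∑ i, c μ i |π μ i⟩⟨i|` with `∑ μ, (K μ)ᴴ K μ = 1`, there exist unitaries `U_i` on a
`(k+1)`-dimensional ancilla and an orthonormal family `{|φ μ⟩}` with
`⟨φ μ|U_i|0⟩ = c μ i`; consequently each `K μ` is reproduced from the controlled unitary
`∑ i, |i⟩⟨i| ⊗ U_i`, measurement of `|φ μ⟩`, and the permutation `V μ = ∑ i |π μ i⟩⟨i|`. -/
theorem stmt_7 {d k : ℕ} (π : Fin k → Equiv.Perm (Fin d)) (c : Fin k → Fin d → ℂ)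
    (K : Fin k → Matrix (Fin d) (Fin d) ℂ)
    (hK : ∀ μ i j, K μ j i = if j = π μ i then c μ i else 0)
    (hcomp : ∑ μ, (K μ)ᴴ * K μ = 1) :
    ∃ (Us : Fin d → Matrix (Fin (k + 1)) (Fin (k + 1)) ℂ) (φ : Fin k → Fin (k + 1) → ℂ),
      (∀ i, Us i ∈ Matrix.unitaryGroup (Fin (k + 1)) ℂ) ∧
      (∀ μ ν, ∑ a, (starRingEnd ℂ) (φ μ a) * φ ν a = if μ = ν then 1 else 0) ∧
      (∀ μ i, ∑ a, (starRingEnd ℂ) (φ μ a) * Us i a 0 = c μ i) ∧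
      (∀ μ i j, K μ j i =
        if j = π μ i then ∑ a, (starRingEnd ℂ) (φ μ a) * Us i a 0 else 0) := by
  have hcol : ∀ i, ∃ U ∈ unitaryGroup (Fin (k + 1)) ℂ, ∀ a,
      U a 0 = (Fin.cons 0 fun μ => c μ i : Fin (k + 1) → ℂ) a := by
    intro i
    refine exists_mem_unitaryGroup_col_eq 0 (WithLp.toLp 2 (Fin.cons 0 fun μ => c μ i)) ?_
    rw [EuclideanSpace.norm_eq, Real.sqrt_eq_one, Fin.sum_univ_succ]
    simpa using sum_norm_sq_eq_one_of_sum_conjTranspose_mul_eq_one _ c K hK hcomp i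
  choose Us hUs hUcol using hcol
  have hφU : ∀ μ i,
      ∑ a, (starRingEnd ℂ) ((Pi.single μ.succ 1 : Fin (k + 1) → ℂ) a) * Us i a 0 = c μ i := by
    simp [Pi.single_apply, hUcol]
  refine ⟨Us, fun μ => Pi.single μ.succ 1, hUs, fun μ ν => ?_, hφU, fun μ i j => ?_⟩
  · simp [Pi.single_apply, eq_comm]
  · rw [hK, hφU]
end

section
/- The relative entropy of coherence C(ρ) := min over incoherent states σ of S(ρ‖σ) equals S(Φ(ρ)) − S(ρ), where Φ is the dephasing map and S the von Neumann entropy. Equivalently, for every incoherent state σ, S(ρ‖σ) ≥ S(Φ(ρ)) − S(ρ), with equality at σ = Φ(ρ). -/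
open Matrix
open scoped ComplexOrder

/-- Matrix logarithm of a Hermitian matrix, via its spectral decomposition
(junk value `0` on non-Hermitian input). -/
noncomputable def matLog {d : ℕ} (A : Matrix (Fin d) (Fin d) ℂ) : Matrix (Fin d) (Fin d) ℂ :=
  if h : A.IsHermitian then
    (h.eigenvectorUnitary : Matrix (Fin d) (Fin d) ℂ) *
      Matrix.diagonal (fun i => (Real.log (h.eigenvalues i) : ℂ)) *
      star (h.eigenvectorUnitary : Matrix (Fin d) (Fin d) ℂ)
  else 0

/-- Von Neumann entropy `S(ρ) = -Tr(ρ log ρ)`. -/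
noncomputable def vnEntropy {d : ℕ} (ρ : Matrix (Fin d) (Fin d) ℂ) : ℝ :=
  -((ρ * matLog ρ).trace).re

/-- Quantum relative entropy `S(ρ‖σ) = Tr(ρ log ρ) - Tr(ρ log σ)`. -/
noncomputable def relEnt {d : ℕ} (ρ σ : Matrix (Fin d) (Fin d) ℂ) : ℝ :=
  ((ρ * (matLog ρ - matLog σ)).trace).re

/-!
For an incoherent state `σ = diag q`, `log σ = diag (log q)`, so `Tr(ρ log σ) = ∑ pᵢ log qᵢ`
only sees the diagonal `p` of `ρ`, and likewise `S(Φ(ρ)) = -∑ pᵢ log pᵢ`. Hence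
`S(ρ‖σ) - (S(Φ(ρ)) - S(ρ)) = ∑ pᵢ log pᵢ - ∑ pᵢ log qᵢ` is the classical relative entropy of `p`
and `q`: nonnegative by Gibbs' inequality, and zero for `q = p`.
-/

/-- Where `U i k ≠ 0`, the intertwining relation forces `v i = w k`. -/
theorem Matrix.diagonal_comp_mul_eq_mul_diagonal_comp {n R : Type*} [Fintype n] [DecidableEq n]
    [CommRing R] [NoZeroDivisors R] {v w : n → R} {U : Matrix n n R}
    (h : diagonal v * U = U * diagonal w) (f : R → R) :
    diagonal (f ∘ v) * U = U * diagonal (f ∘ w) := by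
  ext i k
  have hik : (v i - w k) * U i k = 0 := by
    have := congrFun (congrFun h i) k
    simp only [diagonal_mul, mul_diagonal] at this
    rw [sub_mul, this, mul_comm, sub_self]
  simp only [diagonal_mul, mul_diagonal, Function.comp_apply]
  rcases mul_eq_zero.mp hik with hvw | hU
  · rw [sub_eq_zero.mp hvw, mul_comm]
  · simp [hU]

theorem Matrix.IsHermitian.mul_eigenvectorUnitary {𝕜 n : Type*} [RCLike 𝕜] [Fintype n]
    [DecidableEq n] {A : Matrix n n 𝕜} (hA : A.IsHermitian) :
    A * (hA.eigenvectorUnitary : Matrix n n 𝕜) =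
      (hA.eigenvectorUnitary : Matrix n n 𝕜) * diagonal (RCLike.ofReal ∘ hA.eigenvalues) := by
  have hspec : A = (hA.eigenvectorUnitary : Matrix n n 𝕜) *
      diagonal (RCLike.ofReal ∘ hA.eigenvalues) * star (hA.eigenvectorUnitary : Matrix n n 𝕜) :=
    hA.spectral_theorem
  have hunit := (mem_unitaryGroup_iff').mp hA.eigenvectorUnitary.2
  generalize (hA.eigenvectorUnitary : Matrix n n 𝕜) = U at hspec hunit ⊢
  generalize diagonal (RCLike.ofReal ∘ hA.eigenvalues : n → 𝕜) = D at hspec ⊢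
  rw [hspec, mul_assoc _ (star U), hunit, mul_one]

theorem matLog_diagonal {d : ℕ} (v : Fin d → ℝ) :
    matLog (diagonal fun i => (v i : ℂ)) = diagonal fun i => (Real.log (v i) : ℂ) := by
  have hA : (diagonal fun i => (v i : ℂ)).IsHermitian :=
    isHermitian_diagonal_iff.mpr fun i => Complex.conj_ofReal (v i)
  have hlog := diagonal_comp_mul_eq_mul_diagonal_comp hA.mul_eigenvectorUnitary
    fun z => (Real.log z.re : ℂ)
  simp only [Function.comp_def, Complex.ofReal_re, Complex.coe_algebraMap] at hlog
  rw [matLog, dif_pos hA, ← hlog, mul_assoc,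
    (mem_unitaryGroup_iff).mp hA.eigenvectorUnitary.2, mul_one]

theorem deph_eq_diagonal_re {d : ℕ} {A : Matrix (Fin d) (Fin d) ℂ} (hA : A.IsHermitian) :
    deph A = diagonal fun i => ((A i i).re : ℂ) :=
  congrArg diagonal (funext fun i => (hA.coe_re_apply_self i).symm)

theorem eq_deph_of_apply_eq_zero {d : ℕ} {A : Matrix (Fin d) (Fin d) ℂ}
    (hA : ∀ i j, i ≠ j → A i j = 0) : A = deph A := by
  ext i j
  rcases eq_or_ne i j with rfl | hij
  · simp [deph]
  · simp [deph, hij, hA i j hij]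

theorem Matrix.re_trace_mul_diagonal_ofReal {n : Type*} [Fintype n] [DecidableEq n]
    (A : Matrix n n ℂ) (w : n → ℝ) :
    (A * diagonal fun i => (w i : ℂ)).trace.re = ∑ i, (A i i).re * w i := by
  simp [trace, Complex.re_sum]

theorem re_trace_mul_matLog_deph {d : ℕ} (ρ : Matrix (Fin d) (Fin d) ℂ)
    {σ : Matrix (Fin d) (Fin d) ℂ} (hσ : σ.IsHermitian) :
    (ρ * matLog (deph σ)).trace.re = ∑ i, (ρ i i).re * Real.log (σ i i).re := by
  rw [deph_eq_diagonal_re hσ, matLog_diagonal, re_trace_mul_diagonal_ofReal]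

theorem vnEntropy_deph {d : ℕ} {ρ : Matrix (Fin d) (Fin d) ℂ} (hρ : ρ.IsHermitian) :
    vnEntropy (deph ρ) = -∑ i, (ρ i i).re * Real.log (ρ i i).re := by
  rw [vnEntropy, re_trace_mul_matLog_deph _ hρ]
  simp [deph]

theorem relEnt_eq_neg_vnEntropy_sub {d : ℕ} (ρ σ : Matrix (Fin d) (Fin d) ℂ) :
    relEnt ρ σ = -vnEntropy ρ - (ρ * matLog σ).trace.re := by
  rw [relEnt, vnEntropy, mul_sub, trace_sub, Complex.sub_re, neg_neg]

theorem Matrix.PosSemidef.re_apply_self_nonneg {n : Type*} [Fintype n] {A : Matrix n n ℂ}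
    (hA : A.PosSemidef) (i : n) : 0 ≤ (A i i).re :=
  (Complex.nonneg_iff.mp hA.diag_nonneg).1

theorem Matrix.sum_re_apply_self {n : Type*} [Fintype n] (A : Matrix n n ℂ) :
    ∑ i, (A i i).re = A.trace.re := by
  simp [trace, Complex.re_sum]

theorem Real.sum_mul_log_le_sum_mul_log_self {ι : Type*} [Fintype ι] {p q : ι → ℝ}
    (hp : ∀ i, 0 ≤ p i) (hq : ∀ i, 0 ≤ q i) (hsum : ∑ i, q i ≤ ∑ i, p i)
    (hsupp : ∀ i, q i = 0 → p i = 0) :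
    ∑ i, p i * Real.log (q i) ≤ ∑ i, p i * Real.log (p i) := by
  have hterm : ∀ i, p i * Real.log (q i) - p i * Real.log (p i) ≤ q i - p i := by
    intro i
    rcases (hp i).eq_or_lt with hpi | hpi
    · simp [← hpi, hq i]
    have hqi : 0 < q i := (hq i).lt_of_ne fun h => hpi.ne' (hsupp i h.symm)
    calc p i * Real.log (q i) - p i * Real.log (p i)
        = p i * Real.log (q i / p i) := by rw [Real.log_div hqi.ne' hpi.ne']; ring
      _ ≤ p i * (q i / p i - 1) :=
          mul_le_mul_of_nonneg_left (Real.log_le_sub_one_of_pos (div_pos hqi hpi)) hpi.le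
      _ = q i - p i := by field_simp
  have := Finset.sum_le_sum fun i (_ : i ∈ Finset.univ) => hterm i
  simp only [Finset.sum_sub_distrib] at this
  linarith

/-- The relative entropy of coherence equals `S(Φ(ρ)) - S(ρ)`: for every incoherent state `σ`
(whose support contains that of `ρ`), `S(ρ‖σ) ≥ S(Φ(ρ)) - S(ρ)`, with equality at
`σ = Φ(ρ)`. -/
theorem stmt_9 {d : ℕ} (ρ : Matrix (Fin d) (Fin d) ℂ)
    (hρ : ρ.PosSemidef) (htr : ρ.trace = 1) :
    (∀ σ : Matrix (Fin d) (Fin d) ℂ, σ.PosSemidef → σ.trace = 1 →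
      (∀ i j, i ≠ j → σ i j = 0) →
      (∀ i, σ i i = 0 → ρ i i = 0) →
      vnEntropy (deph ρ) - vnEntropy ρ ≤ relEnt ρ σ) ∧
    relEnt ρ (deph ρ) = vnEntropy (deph ρ) - vnEntropy ρ := by
  refine ⟨fun σ hσ hσtr hσoff hsupp => ?_, ?_⟩
  · have hgibbs :
        ∑ i, (ρ i i).re * Real.log (σ i i).re ≤ ∑ i, (ρ i i).re * Real.log (ρ i i).re := by
      refine Real.sum_mul_log_le_sum_mul_log_self hρ.re_apply_self_nonneg hσ.re_apply_self_nonneg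
        (by rw [sum_re_apply_self, sum_re_apply_self, htr, hσtr]) fun i hi => ?_
      rw [hsupp i (by simpa [hi] using (hσ.isHermitian.coe_re_apply_self i).symm),
        Complex.zero_re]
    rw [relEnt_eq_neg_vnEntropy_sub, eq_deph_of_apply_eq_zero hσoff,
      re_trace_mul_matLog_deph _ hσ.isHermitian, vnEntropy_deph hρ.isHermitian]
    linarith
  · rw [relEnt_eq_neg_vnEntropy_sub, re_trace_mul_matLog_deph _ hρ.isHermitian,
      vnEntropy_deph hρ.isHermitian]
    ring
end
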